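/- Let n > 0, f : ℤ₂ⁿ → ℤ, and let A u v = f(u + v) be the adjacency matrix of Cay(ℤ₂ⁿ, f). Then for every t ∈ ℝ, the evolution operator factors as a product over the group: exp(-(i t)·A) = ∏_{x ∈ ℤ₂ⁿ} exp(-(i t f(x))·ρ(x)), where ρ(x) is the permutation matrix with entries ρ(x) u v = 1 if u = x + v and 0 otherwise. -/

import Mathlib

open Matrix Finset

/-!
The adjacency matrix of a weighted Cayley graph on a finite group is `∑ x, f x • ρ x`, since
`A u v = f (u - v)` (on `ℤ₂ⁿ` subtraction is addition). As `ρ x * ρ y = ρ (x + y)`, the `ρ x`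
commute when the group is abelian, so the exponential of the sum is the product of the
exponentials.
-/

section TranslationMatrix

variable {G : Type*} [DecidableEq G] (R : Type*) [Semiring R]

def translationMatrix [Add G] (x : G) : Matrix G G R :=
  of fun u v => if u = x + v then 1 else 0

variable {R}

@[simp]
theorem translationMatrix_apply [Add G] (x u v : G) :
    translationMatrix R x u v = if u = x + v then 1 else 0 :=
  rfl

theorem translationMatrix_mul [Fintype G] [AddGroup G] (x y : G) :
    translationMatrix R x * translationMatrix R y = translationMatrix R (x + y) := by
  ext u v
  rw [mul_apply, Finset.sum_eq_single (-x + u)]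
  · simp [add_assoc, eq_neg_add_iff_add_eq, eq_comm]
  · intro w _ hw
    simp [eq_neg_add_iff_add_eq.not.mp hw |> Ne.symm]
  · simp

theorem commute_translationMatrix [Fintype G] [AddCommGroup G] (x y : G) :
    Commute (translationMatrix R x) (translationMatrix R y) := by
  rw [Commute, SemiconjBy, translationMatrix_mul, translationMatrix_mul, add_comm]

theorem sum_smul_translationMatrix [Fintype G] [AddGroup G] (c : G → R) :
    ∑ x, c x • translationMatrix R x = of fun u v => c (u - v) := by
  ext u v
  simp only [Matrix.sum_apply, Matrix.smul_apply, translationMatrix_apply, smul_eq_mul, mul_ite,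
    mul_one, mul_zero, ← sub_eq_iff_eq_add, Finset.sum_ite_eq, Finset.mem_univ, if_true, of_apply]

end TranslationMatrix

theorem sub_eq_add_of_pi_zmod_two {ι : Type*} (u v : ι → ZMod 2) : u - v = u + v := by
  ext i
  simp [sub_eq_add_neg, ZMod.neg_eq_self_mod_two]

theorem cubelike_evolution_factorization_general
    (n : ℕ) (f : (Fin n → ZMod 2) → ℤ)
    (A : Matrix (Fin n → ZMod 2) (Fin n → ZMod 2) ℂ)
    (hA : ∀ u v, A u v = (f (u + v) : ℂ))
    (ρ : (Fin n → ZMod 2) → Matrix (Fin n → ZMod 2) (Fin n → ZMod 2) ℂ)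
    (hρ : ∀ x u v, ρ x u v = if u = x + v then 1 else 0)
    (t : ℝ)
    (hc : ((Finset.univ : Finset (Fin n → ZMod 2)) : Set (Fin n → ZMod 2)).Pairwise
      (Function.onFun Commute
        (fun x => NormedSpace.exp ((-(Complex.I * t * (f x : ℂ))) • ρ x)))) :
    NormedSpace.exp ((-(Complex.I * t)) • A) =
      Finset.univ.noncommProd
        (fun x => NormedSpace.exp ((-(Complex.I * t * (f x : ℂ))) • ρ x)) hc := by
  obtain rfl : ρ = translationMatrix ℂ := by
    ext x u v
    exact hρ x u v
  have hA_sum : A = ∑ x, (f x : ℂ) • translationMatrix ℂ x := by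
    ext u v
    rw [sum_smul_translationMatrix, of_apply, hA, sub_eq_add_of_pi_zmod_two]
  have hsmul : (-(Complex.I * t)) • A =
      ∑ x, (-(Complex.I * t * (f x : ℂ))) • translationMatrix ℂ x := by
    simp only [hA_sum, Finset.smul_sum, smul_smul, neg_mul]
  rw [hsmul]
  exact Matrix.exp_sum_of_commute _ _ fun x _ y _ _ =>
    ((commute_translationMatrix x y).smul_left _).smul_right _

theorem cubelike_evolution_factorization
    (n : ℕ) (hn : 0 < n) (f : (Fin n → ZMod 2) → ℤ)
    (A : Matrix (Fin n → ZMod 2) (Fin n → ZMod 2) ℂ)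
    (hA : ∀ u v, A u v = (f (u + v) : ℂ))
    (ρ : (Fin n → ZMod 2) → Matrix (Fin n → ZMod 2) (Fin n → ZMod 2) ℂ)
    (hρ : ∀ x u v, ρ x u v = if u = x + v then 1 else 0)
    (t : ℝ)
    (hc : ((Finset.univ : Finset (Fin n → ZMod 2)) : Set (Fin n → ZMod 2)).Pairwise
      (Function.onFun Commute
        (fun x => NormedSpace.exp ((-(Complex.I * t * (f x : ℂ))) • ρ x)))) :
    NormedSpace.exp ((-(Complex.I * t)) • A) =
      Finset.univ.noncommProd
        (fun x => NormedSpace.exp ((-(Complex.I * t * (f x : ℂ))) • ρ x)) hc :=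
  cubelike_evolution_factorization_general n f A hA ρ hρ t hc
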